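/- For θ ∈ su(2), one has exp(θ) = -I if and only if |θ| = √2·π·(2k+1) for some nonnegative integer k. -/

import Mathlib

/-!
For trace-free `θ`, Cayley–Hamilton gives `θ² = -det θ • 1`, and for `θ ∈ su(2)` the determinant
is `|θ₀₀|² + |θ₀₁|² = α²` with `α ≥ 0`, so that `|θ| = √2 α`. Splitting the exponential series
into its even and odd parts gives `exp θ = cos α • 1 + sinc α • θ`. Taking traces, `exp θ = -1`
forces `cos α = -1`, i.e. `α = (2k+1)π`; conversely `cos α = -1` makes `sin α`, hence `sinc α`,
vanish.
-/

open Matrix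

namespace Real
open Nat

theorem hasSum_sinc (r : ℝ) :
    HasSum (fun n : ℕ => (-1) ^ n * r ^ (2 * n) / (2 * n + 1)!) (sinc r) := by
  rcases eq_or_ne r 0 with rfl | hr
  · convert hasSum_single (f := fun n : ℕ => (-1 : ℝ) ^ n * 0 ^ (2 * n) / (2 * n + 1)!) 0
      fun n hn => by simp [hn] using 1
    simp
  · rw [sinc_of_ne_zero hr]
    convert! (hasSum_sin r).div_const r using 2 with n
    rw [pow_succ]
    field_simp

theorem sinc_eq_zero_of_cos_eq_neg_one {x : ℝ} (hx : cos x = -1) : sinc x = 0 := by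
  have hx0 : x ≠ 0 := by rintro rfl; norm_num at hx
  have hsin : sin x = 0 := by nlinarith [sin_sq_add_cos_sq x]
  rw [sinc_of_ne_zero hx0, hsin, zero_div]

theorem cos_eq_neg_one_iff_of_nonneg {x : ℝ} (hx : 0 ≤ x) :
    cos x = -1 ↔ ∃ k : ℕ, x = π * (2 * k + 1) := by
  rw [cos_eq_neg_one_iff]
  constructor
  · rintro ⟨n, rfl⟩
    lift n to ℕ using by
      by_contra! hn
      have : (n : ℝ) ≤ -1 := by exact_mod_cast Int.le_sub_one_iff.mpr hn
      nlinarith [pi_pos]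
    exact ⟨n, by push_cast; ring⟩
  · rintro ⟨k, rfl⟩
    exact ⟨k, by push_cast; ring⟩

end Real

open Nat Real in
theorem NormedSpace.exp_eq_cos_smul_one_add_sinc_smul {𝔸 : Type*} [Ring 𝔸] [Algebra ℝ 𝔸]
    [TopologicalSpace 𝔸] [IsTopologicalRing 𝔸] [ContinuousSMul ℝ 𝔸] [T2Space 𝔸]
    {A : 𝔸} {α : ℝ} (hA : A * A = (-α ^ 2) • (1 : 𝔸)) :
    exp A = cos α • (1 : 𝔸) + sinc α • A := by
  have hpow_even (n : ℕ) : A ^ (2 * n) = ((-1) ^ n * α ^ (2 * n)) • (1 : 𝔸) := by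
    rw [pow_mul, sq, hA, smul_pow, one_pow, neg_pow, pow_mul]
  rw [exp_eq_tsum ℝ]
  refine (HasSum.even_add_odd ?_ ?_).tsum_eq
  · convert (hasSum_cos α).smul_const (1 : 𝔸) using 2 with n
    rw [hpow_even, smul_smul, div_eq_inv_mul]
  · convert (hasSum_sinc α).smul_const A using 2 with n
    rw [pow_succ, hpow_even, smul_mul_assoc, one_mul, smul_smul, div_eq_inv_mul]

namespace Matrix

theorem mul_self_fin_two {R : Type*} [CommRing R] (A : Matrix (Fin 2) (Fin 2) R) :
    A * A = A.trace • A - A.det • (1 : Matrix (Fin 2) (Fin 2) R) := by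
  ext i j
  fin_cases i <;> fin_cases j <;>
    simp [mul_apply, trace_fin_two, det_fin_two] <;> ring

theorem det_fin_two_of_trace_eq_zero_of_conjTranspose_eq_neg {A : Matrix (Fin 2) (Fin 2) ℂ}
    (htr : A.trace = 0) (hskew : Aᴴ = -A) :
    A.det = (Complex.normSq (A 0 0) + Complex.normSq (A 0 1) : ℝ) := by
  have h11 : A 1 1 = -A 0 0 := by
    rw [trace_fin_two] at htr; linear_combination htr
  have h00 : star (A 0 0) = -A 0 0 := by
    simpa only [conjTranspose_apply, neg_apply] using congrFun (congrFun hskew 0) 0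
  have h10 : A 1 0 = -star (A 0 1) := by
    have h := congrFun (congrFun hskew 1) 0
    rw [conjTranspose_apply, neg_apply] at h
    rw [h, neg_neg]
  push_cast [← Complex.mul_conj]
  rw [det_fin_two, h11, h10]
  simp only [Complex.star_def] at h00 ⊢
  rw [h00]
  ring

theorem exp_eq_neg_one_iff_cos_eq_neg_one {n : Type*} [Fintype n] [DecidableEq n]
    [Nonempty n] {A : Matrix n n ℂ} {α : ℝ} (htr : A.trace = 0)
    (hA : A * A = (-α ^ 2) • (1 : Matrix n n ℂ)) :
    NormedSpace.exp A = -1 ↔ Real.cos α = -1 := by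
  rw [NormedSpace.exp_eq_cos_smul_one_add_sinc_smul hA]
  constructor
  · intro h
    have htr_exp : Real.cos α * (Fintype.card n : ℂ) = -1 * Fintype.card n := by
      simpa [trace_add, trace_smul, htr] using congrArg trace h
    exact_mod_cast mul_right_cancel₀ (by simp) htr_exp
  · intro h
    rw [h, Real.sinc_eq_zero_of_cos_eq_neg_one h]
    simp

end Matrix

/-- For `θ ∈ su(2)` (trace-free skew-Hermitian, with norm `|θ| = √(-Tr θ²)`),
`exp(θ) = -I` iff `|θ| = √2·π·(2k+1)` for some nonnegative integer `k`. -/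
theorem stmt_1 (θ : Matrix (Fin 2) (Fin 2) ℂ)
    (htr : θ.trace = 0) (hskew : θᴴ = -θ) :
    NormedSpace.exp θ = -1 ↔
      ∃ k : ℕ, Real.sqrt (-(θ * θ).trace.re) = Real.sqrt 2 * Real.pi * (2 * k + 1) := by
  obtain ⟨α, hα, hsq⟩ : ∃ α : ℝ, 0 ≤ α ∧ θ * θ = (-α ^ 2) • (1 : Matrix (Fin 2) (Fin 2) ℂ) := by
    refine ⟨√(Complex.normSq (θ 0 0) + Complex.normSq (θ 0 1)), Real.sqrt_nonneg _, ?_⟩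
    rw [mul_self_fin_two, htr, zero_smul, zero_sub,
      det_fin_two_of_trace_eq_zero_of_conjTranspose_eq_neg htr hskew,
      Real.sq_sqrt (add_nonneg (Complex.normSq_nonneg _) (Complex.normSq_nonneg _)),
      neg_smul, Complex.coe_smul]
  have hnorm : √(-(θ * θ).trace.re) = √2 * α := by
    have htrace : -(θ * θ).trace.re = 2 * α ^ 2 := by
      rw [hsq, trace_smul, trace_one, Fintype.card_fin, Complex.smul_re]
      norm_num [mul_comm]
    rw [htrace, Real.sqrt_mul zero_le_two, Real.sqrt_sq hα]
  rw [exp_eq_neg_one_iff_cos_eq_neg_one htr hsq, Real.cos_eq_neg_one_iff_of_nonneg hα, hnorm]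
  simp_rw [mul_assoc √2, mul_right_inj' (Real.sqrt_ne_zero'.2 two_pos)]
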